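/- arXiv:1606.06321 — 4 statements merged into one kernel-verified Lean document; each statement's English description precedes it below -/
import Mathlib

section
/- Let X, Y be normed spaces, U ⊆ X open, and f : U → Y a function such that the directional derivative ∂_x f(u) = lim_{t→0} (f(u+tx) − f(u))/t exists for every u ∈ U and x ∈ X, and for each fixed x the map u ↦ ∂_x f(u) is continuous. Then for each u ∈ U, the map x ↦ ∂_x f(u) is additive and homogeneous (linear) in x. -/
/-! Homogeneity holds for any directional derivative. For additivity, split
`f (u + t • (x + y)) - f u` at `u + t • x`. On the segment from `u + t • x` to
`u + t • x + t • y` the derivative `∂_y f` stays close to `∂_y f (u)` by continuity, so the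
mean value inequality shows that the second increment divided by `t` tends to `∂_y f (u)`. -/

open Filter Topology Metric Set

section LineDeriv

variable {X Y : Type*} [NormedAddCommGroup X] [NormedSpace ℝ X]
  [NormedAddCommGroup Y] [NormedSpace ℝ Y] {f : X → Y}

theorem HasLineDerivAt.hasDerivAt_comp_line {L : Y} {w y : X} {s : ℝ}
    (h : HasLineDerivAt ℝ f L (w + s • y) y) :
    HasDerivAt (fun t : ℝ => f (w + t • y)) L s := by
  have h' : HasDerivAt (fun t : ℝ => f (w + s • y + t • y)) L (s - s) := by rwa [sub_self]
  convert h'.comp_sub_const s s using 3 with t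
  module

theorem norm_sub_sub_smul_le_of_hasLineDerivAt {D : X → Y} {w y : X} {t C : ℝ} {L : Y}
    (hf : ∀ s ∈ uIcc 0 t, HasLineDerivAt ℝ f (D (w + s • y)) (w + s • y) y)
    (hC : ∀ s ∈ uIcc 0 t, ‖D (w + s • y) - L‖ ≤ C) :
    ‖f (w + t • y) - f w - t • L‖ ≤ C * |t| := by
  have hderiv : ∀ s ∈ uIcc 0 t, HasDerivWithinAt (fun s : ℝ => f (w + s • y) - s • L)
      (D (w + s • y) - L) (uIcc 0 t) s := fun s hs =>
    ((hf s hs).hasDerivAt_comp_line.sub ((hasDerivAt_id s).smul_const L)).hasDerivWithinAt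
      |>.congr_deriv (by simp)
  simpa [sub_right_comm] using
    (convex_uIcc (0 : ℝ) t).norm_image_sub_le_of_norm_hasDerivWithin_le
      hderiv hC left_mem_uIcc right_mem_uIcc

theorem tendsto_slope_zero_prod_of_continuousAt {D : X → Y} {u y : X}
    (hf : ∀ᶠ w in 𝓝 u, HasLineDerivAt ℝ f (D w) w y) (hD : ContinuousAt D u) :
    Tendsto (fun p : X × ℝ => p.2⁻¹ • (f (p.1 + p.2 • y) - f p.1)) (𝓝 u ×ˢ 𝓝[≠] 0)
      (𝓝 (D u)) := by
  refine nhds_basis_closedBall.tendsto_right_iff.2 fun ε hε => ?_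
  obtain ⟨δ, hδ, hball⟩ := Metric.mem_nhds_iff.1 (hf.and (hD (closedBall_mem_nhds _ hε)))
  have hsmall : ∀ᶠ t : ℝ in 𝓝[≠] 0, ‖t • y‖ < δ / 2 ∧ t ≠ 0 := by
    refine (eventually_nhdsWithin_of_eventually_nhds ?_).and self_mem_nhdsWithin
    have hcont : Continuous fun t : ℝ => ‖t • y‖ := by fun_prop
    exact (hcont.tendsto' 0 0 (by simp)).eventually_lt_const (half_pos hδ)
  filter_upwards [prod_mem_prod (ball_mem_nhds u (half_pos hδ)) hsmall]
    with ⟨w, t⟩ ⟨hw, hty, ht⟩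
  have hsegment : ∀ s ∈ uIcc 0 t, w + s • y ∈ ball u δ := fun s hs => by
    have hsy : ‖s • y‖ ≤ ‖t • y‖ := by
      simpa [norm_smul] using
        mul_le_mul_of_nonneg_right (abs_sub_left_of_mem_uIcc hs) (norm_nonneg y)
    calc dist (w + s • y) u ≤ dist w u + ‖s • y‖ := by
          simpa [dist_eq_norm, add_sub_right_comm] using norm_add_le (w - u) (s • y)
      _ < δ / 2 + δ / 2 := add_lt_add_of_lt_of_le hw (hsy.trans hty.le)
      _ = δ := add_halves δ
  have hmvt := norm_sub_sub_smul_le_of_hasLineDerivAt (L := D u) (C := ε)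
    (fun s hs => (hball (hsegment s hs)).1)
    (fun s hs => by simpa [dist_eq_norm] using (hball (hsegment s hs)).2)
  rw [mem_closedBall, dist_eq_norm]
  calc ‖t⁻¹ • (f (w + t • y) - f w) - D u‖
        = |t|⁻¹ * ‖f (w + t • y) - f w - t • D u‖ := by
        rw [← abs_inv, ← Real.norm_eq_abs, ← norm_smul, smul_sub t⁻¹ _ (t • D u), smul_smul,
          inv_mul_cancel₀ ht, one_smul]
    _ ≤ |t|⁻¹ * (ε * |t|) := by gcongr
    _ = ε := by field_simp

theorem HasLineDerivAt.add_of_continuousAt {D : X → Y} {u x y : X} {L : Y}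
    (hx : HasLineDerivAt ℝ f L u x) (hy : ∀ᶠ w in 𝓝 u, HasLineDerivAt ℝ f (D w) w y)
    (hD : ContinuousAt D u) :
    HasLineDerivAt ℝ f (L + D u) u (x + y) := by
  have hbase : Tendsto (fun t : ℝ => (u + t • x, t)) (𝓝[≠] 0) (𝓝 u ×ˢ 𝓝[≠] 0) :=
    (Tendsto.mono_left (Continuous.tendsto' (by fun_prop) 0 u (by simp))
      nhdsWithin_le_nhds).prodMk tendsto_id
  refine hasLineDerivAt_iff_tendsto_slope_zero.2
    ((hasLineDerivAt_iff_tendsto_slope_zero.1 hx).add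
      ((tendsto_slope_zero_prod_of_continuousAt hy hD).comp hbase) |>.congr fun t => ?_)
  rw [Function.comp_apply, ← smul_add, smul_add t x y, ← add_assoc]
  congr 1
  abel

end LineDeriv

/-- If all directional derivatives `∂ₓ f(u)` exist on an open set `U` and are continuous in
the base point `u` for each fixed direction `x`, then `x ↦ ∂ₓ f(u)` is additive and
homogeneous (linear) in `x` (Flett, Lemma 4.1.5). -/
theorem stmt6
    {X Y : Type*} [NormedAddCommGroup X] [NormedSpace ℝ X]
    [NormedAddCommGroup Y] [NormedSpace ℝ Y]
    (U : Set X) (hU : IsOpen U) (f : X → Y) (D : X → X → Y)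
    (hD : ∀ u ∈ U, ∀ x : X,
      Tendsto (fun t : ℝ => t⁻¹ • (f (u + t • x) - f u)) (𝓝[≠] 0) (𝓝 (D u x)))
    (hcont : ∀ x : X, ContinuousOn (fun u => D u x) U) :
    ∀ u ∈ U, (∀ x y : X, D u (x + y) = D u x + D u y) ∧
      (∀ (c : ℝ) (x : X), D u (c • x) = c • D u x) := by
  have hline : ∀ w ∈ U, ∀ x, HasLineDerivAt ℝ f (D w x) w x := fun w hw x =>
    hasLineDerivAt_iff_tendsto_slope_zero.2 (hD w hw x)
  intro u hu
  refine ⟨fun x y => ?_, fun c x => ((hline u hu (c • x)).unique ((hline u hu x).smul c))⟩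
  have hy : ∀ᶠ w in 𝓝 u, HasLineDerivAt ℝ f (D w y) w y :=
    eventually_of_mem (hU.mem_nhds hu) fun w hw => hline w hw y
  exact (hline u hu (x + y)).unique
    ((hline u hu x).add_of_continuousAt hy ((hcont y).continuousAt (hU.mem_nhds hu)))
end

section
/- Let X₀, X₁, X₂, X₃ be Banach spaces, X₀ continuously embedded in X₁, U ⊆ X₁ open. Let f, f₁, …, f_k : U → X₂ have directional derivatives ∂_x f, ∂_x f_i for all x ∈ X₀, and let g : X₂ → X₃ be (k+1)-times strongly continuously Gâteaux differentiable. Then γ(u) := ∂^k_{f₁(u)…f_k(u)} g(f(u)) has directional derivative in every direction x ∈ X₀ with ∂_x γ(u) = ∂^{k+1}_{∂_x f(u), f₁(u), …, f_k(u)} g(f(u)) + Σ_{i=1}^k ∂^k_{f₁(u), …, ∂_x f_i(u), …, f_k(u)} g(f(u)). -/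
/-!
Write `c t = f (u + t • ι x)` and `w t = (fᵢ (u + t • ι x))ᵢ`, so that
`γ (u + t • ι x) = D (c t) (w t)` with `D = ∂ᵏ g`, and split the increment into a variation of the
base point, `D (c t) (w t) - D (c 0) (w t)`, and a variation of the directions,
`D (c 0) (w t) - D (c 0) (w 0)`. The second is a continuous multilinear map applied to a curve
differentiable at `0`. For the first, the mean value theorem on the segment from `c 0` to `c t`
bounds its distance to `t • ∂ᵏ⁺¹ g (c 0) (w 0, c')` by `|t|` times the oscillation of `∂ᵏ⁺¹ g`
near `(c 0, w 0, c')`, which is small uniformly along the segment by joint continuity and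
compactness of `[0, 1]`.
-/

open Filter Topology Set Function

def ContinuousMultilinearMap.ofUpdate {F Y ι : Type*} [NormedAddCommGroup F] [NormedSpace ℝ F]
    [NormedAddCommGroup Y] [NormedSpace ℝ Y] [DecidableEq ι] (g : (ι → F) → Y)
    (hadd : ∀ w i y y', g (update w i (y + y')) = g (update w i y) + g (update w i y'))
    (hsmul : ∀ w i (a : ℝ) y, g (update w i (a • y)) = a • g (update w i y))
    (hg : Continuous g) : ContinuousMultilinearMap ℝ (fun _ : ι => F) Y where
  toFun := g
  map_update_add' w i y y' := by convert hadd w i y y'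
  map_update_smul' w i a y := by convert hsmul w i a y
  cont := hg

section LineDerivative

variable {P E Y : Type*} [TopologicalSpace P]
  [NormedAddCommGroup E] [NormedSpace ℝ E] [NormedAddCommGroup Y]

theorem eventually_forall_Icc_norm_sub_lt {ψ : P → E → E → Y} {p : ℝ → P} {c : ℝ → E} {c' : E}
    (hψ : ContinuousAt (fun q : P × E × E => ψ q.1 q.2.1 q.2.2) (p 0, c 0, c'))
    (hp : ContinuousAt p 0) (hc : HasDerivAt c c' 0) {ε : ℝ} (hε : 0 < ε) :
    ∀ᶠ t in 𝓝[≠] 0, ∀ s ∈ Icc (0 : ℝ) 1,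
      ‖ψ (p t) (c 0 + s • (c t - c 0)) (slope c 0 t) - ψ (p 0) (c 0) c'‖ < ε := by
  have hnear : ∀ s ∈ Icc (0 : ℝ) 1, ∀ᶠ y : (P × E × E) × ℝ in 𝓝 ((p 0, 0, c'), s),
      ‖ψ y.1.1 (c 0 + y.2 • y.1.2.1) y.1.2.2 - ψ (p 0) (c 0) c'‖ < ε := by
    intro s _
    have hcont :
        Continuous fun y : (P × E × E) × ℝ => (y.1.1, c 0 + y.2 • y.1.2.1, y.1.2.2) := by
      fun_prop
    have hy : Tendsto (fun y : (P × E × E) × ℝ => (y.1.1, c 0 + y.2 • y.1.2.1, y.1.2.2))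
        (𝓝 ((p 0, 0, c'), s)) (𝓝 (p 0, c 0, c')) := by
      simpa using hcont.tendsto ((p 0, 0, c'), s)
    exact (tendsto_iff_norm_sub_tendsto_zero.1 (hψ.tendsto.comp hy)).eventually
      (gt_mem_nhds hε)
  have hcurve : Tendsto (fun t => (p t, c t - c 0, slope c 0 t)) (𝓝[≠] 0) (𝓝 (p 0, 0, c')) := by
    refine (hp.tendsto.mono_left nhdsWithin_le_nhds).prodMk_nhds (.prodMk_nhds ?_ ?_)
    · simpa using (hc.continuousAt.tendsto.sub_const (c 0)).mono_left nhdsWithin_le_nhds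
    · exact hasDerivAt_iff_tendsto_slope.1 hc
  exact hcurve.eventually (isCompact_Icc.eventually_forall_of_forall_eventually
    (P := fun q s => ‖ψ q.1 (c 0 + s • q.2.1) q.2.2 - ψ (p 0) (c 0) c'‖ < ε) hnear)

variable [NormedSpace ℝ Y]

theorem hasDerivAt_comp_add_smul_of_hasLineDerivAt {φ : E → Y} {φ' : E → Y} {z : E}
    (hφ : ∀ b, HasLineDerivAt ℝ φ (φ' b) b z) (b : E) (s : ℝ) :
    HasDerivAt (fun r : ℝ => φ (b + r • z)) (φ' (b + s • z)) s := by
  have h := HasDerivAt.comp_sub_const s s (by rw [sub_self]; exact hφ (b + s • z))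
  convert h using 3 with r
  rw [add_assoc, ← add_smul, add_sub_cancel]

theorem hasDerivAt_sub_of_continuousAt_lineDeriv {φ : P → E → Y} {φ' : P → E → E → Y}
    (hφ : ∀ p b z, HasLineDerivAt ℝ (φ p) (φ' p b z) b z) {p : ℝ → P} {c : ℝ → E} {c' : E}
    (hφ' : ContinuousAt (fun q : P × E × E => φ' q.1 q.2.1 q.2.2) (p 0, c 0, c'))
    (hp : ContinuousAt p 0) (hc : HasDerivAt c c' 0) :
    HasDerivAt (fun t => φ (p t) (c t) - φ (p t) (c 0)) (φ' (p 0) (c 0) c') 0 := by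
  set L := φ' (p 0) (c 0) c'
  have hhom : ∀ p b z (a : ℝ), φ' p b (a • z) = a • φ' p b z := fun p b z a =>
    (hφ p b (a • z)).unique ((hφ p b z).smul a)
  rw [hasDerivAt_iff_isLittleO_nhds_zero]
  refine Asymptotics.IsLittleO.of_bound fun ε hε => ?_
  filter_upwards [eventually_nhdsWithin_iff.1 (eventually_forall_Icc_norm_sub_lt hφ' hp hc hε)]
    with t ht
  rcases eq_or_ne t 0 with rfl | ht0
  · simp
  have hdt : c t - c 0 = t • slope c 0 t := by simpa using (sub_smul_slope c 0 t).symm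
  have hderiv : ∀ s ∈ Icc (0 : ℝ) 1,
      HasDerivWithinAt (fun s : ℝ => φ (p t) (c 0 + s • (c t - c 0)) - s • t • L)
        (t • (φ' (p t) (c 0 + s • (c t - c 0)) (slope c 0 t) - L)) (Icc 0 1) s := by
    intro s _
    have h := ((hasDerivAt_comp_add_smul_of_hasLineDerivAt (fun b => hφ (p t) b (c t - c 0))
      (c 0) s).sub ((hasDerivAt_id s).smul_const (t • L))).hasDerivWithinAt (s := Icc 0 1)
    rwa [one_smul, hdt, hhom, ← smul_sub, ← hdt] at h
  have hmvt := norm_image_sub_le_of_norm_deriv_le_segment_01' hderiv fun s hs => by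
    rw [norm_smul, Real.norm_eq_abs]
    exact mul_le_mul_of_nonneg_left (ht ht0 s (Ico_subset_Icc_self hs)).le (abs_nonneg t)
  convert hmvt using 1
  · congr 1
    simp only [zero_add, sub_self, one_smul, zero_smul, add_zero, add_sub_cancel]
    abel
  · rw [Real.norm_eq_abs, mul_comm]

variable {F ι : Type*} [NormedAddCommGroup F] [NormedSpace ℝ F] [Fintype ι] [DecidableEq ι]

theorem hasDerivAt_comp_of_lineDeriv_of_multilinear {D : E → (ι → F) → Y}
    {D' : E → (ι → F) → E → Y} (hD : ∀ b w z, HasLineDerivAt ℝ (D · w) (D' b w z) b z)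
    {c : ℝ → E} {c' : E} {w : ℝ → ι → F} {w' : ι → F}
    (hD' : ContinuousAt (fun q : (ι → F) × E × E => D' q.2.1 q.1 q.2.2) (w 0, c 0, c'))
    (M : ContinuousMultilinearMap ℝ (fun _ : ι => F) Y) (hM : D (c 0) = M)
    (hc : HasDerivAt c c' 0) (hw : HasDerivAt w w' 0) :
    HasDerivAt (fun t => D (c t) (w t))
      (D' (c 0) (w 0) c' + ∑ i, D (c 0) (update (w 0) i (w' i))) 0 := by
  have hbase := hasDerivAt_sub_of_continuousAt_lineDeriv (φ := fun w b => D b w)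
    (fun w b z => hD b w z) hD' hw.continuousAt hc
  have hdir := (M.hasFDerivAt (w 0)).comp_hasDerivAt 0 hw
  rw [M.linearDeriv_apply, ← hM] at hdir
  convert hbase.add hdir using 1
  ext t
  simp [hM]

end LineDerivative

theorem stmt8_general
    {X₀ X₁ X₂ X₃ : Type*}
    [NormedAddCommGroup X₀] [NormedSpace ℝ X₀]
    [NormedAddCommGroup X₁] [NormedSpace ℝ X₁]
    [NormedAddCommGroup X₂] [NormedSpace ℝ X₂]
    [NormedAddCommGroup X₃] [NormedSpace ℝ X₃]
    (ι : X₀ →L[ℝ] X₁)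
    (U : Set X₁)
    (k : ℕ)
    (f : X₁ → X₂) (fs : Fin k → X₁ → X₂)
    (Df : X₁ → X₀ → X₂) (Dfs : Fin k → X₁ → X₀ → X₂)
    (hDf : ∀ u ∈ U, ∀ x : X₀,
      Tendsto (fun t : ℝ => t⁻¹ • (f (u + t • ι x) - f u)) (𝓝[≠] 0) (𝓝 (Df u x)))
    (hDfs : ∀ i, ∀ u ∈ U, ∀ x : X₀,
      Tendsto (fun t : ℝ => t⁻¹ • (fs i (u + t • ι x) - fs i u)) (𝓝[≠] 0) (𝓝 (Dfs i u x)))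
    (Dg : (j : ℕ) → X₂ → (Fin j → X₂) → X₃)
    (hDgrec : ∀ j, j ≤ k → ∀ (a : X₂) (w : Fin (j+1) → X₂),
      Tendsto (fun t : ℝ => t⁻¹ • (Dg j (a + t • w (Fin.last j)) (w ∘ Fin.castSucc)
        - Dg j a (w ∘ Fin.castSucc))) (𝓝[≠] 0) (𝓝 (Dg (j+1) a w)))
    (hDgcont : ∀ j, j ≤ k + 1 → Continuous (fun p : X₂ × (Fin j → X₂) => Dg j p.1 p.2))
    (hDgmulti : ∀ j, j ≤ k + 1 → ∀ (a : X₂) (i : Fin j) (v : Fin j → X₂) (y y' : X₂) (c : ℝ),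
      Dg j a (Function.update v i (y + y'))
          = Dg j a (Function.update v i y) + Dg j a (Function.update v i y') ∧
      Dg j a (Function.update v i (c • y)) = c • Dg j a (Function.update v i y))
    (γ : X₁ → X₃) (hγ : ∀ u, γ u = Dg k (f u) (fun i => fs i u))
    (u : X₁) (hu : u ∈ U) (x : X₀) :
    Tendsto (fun t : ℝ => t⁻¹ • (γ (u + t • ι x) - γ u)) (𝓝[≠] 0)
      (𝓝 (Dg (k+1) (f u) (Fin.snoc (fun i => fs i u) (Df u x))
        + ∑ i : Fin k, Dg k (f u) (Function.update (fun i' => fs i' u) i (Dfs i u x)))) := by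
  have hc : HasLineDerivAt ℝ f (Df u x) u (ι x) :=
    hasLineDerivAt_iff_tendsto_slope_zero.2 (hDf u hu x)
  have hw : HasDerivAt (fun t : ℝ => fun i => fs i (u + t • ι x)) (fun i => Dfs i u x) 0 :=
    hasDerivAt_pi.2 fun i => hasLineDerivAt_iff_tendsto_slope_zero.2 (hDfs i u hu x)
  have hline : ∀ b w z, HasLineDerivAt ℝ (Dg k · w) (Dg (k + 1) b (Fin.snoc w z)) b z := by
    intro b w z
    have h := hDgrec k le_rfl b (Fin.snoc w z)
    simp only [Fin.snoc_last, Fin.snoc_comp_castSucc] at h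
    exact hasLineDerivAt_iff_tendsto_slope_zero.2 h
  have hcont :
      Continuous fun q : (Fin k → X₂) × X₂ × X₂ => Dg (k + 1) q.2.1 (Fin.snoc q.1 q.2.2) :=
    (hDgcont (k + 1) le_rfl).comp
      (continuous_snd.fst.prodMk (continuous_fst.finSnoc continuous_snd.snd))
  let M := ContinuousMultilinearMap.ofUpdate (Dg k (f u))
    (fun w i y y' => (hDgmulti k k.le_succ _ i w y y' 1).1)
    (fun w i a y => (hDgmulti k k.le_succ _ i w y y a).2)
    ((hDgcont k k.le_succ).comp (Continuous.prodMk_right _))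
  have hM : Dg k (f (u + (0 : ℝ) • ι x)) = M := by
    rw [zero_smul, add_zero]
    rfl
  have h := hasDerivAt_comp_of_lineDeriv_of_multilinear hline hcont.continuousAt M hM hc hw
  rw [← hasLineDerivAt_iff_tendsto_slope_zero]
  simpa [HasLineDerivAt, hγ] using h

/-- Lemma 2.4: derivative of `u ↦ ∂^k_{f₁(u)…f_k(u)} g (f u)` along a direction `x ∈ X₀`
(embedded into `X₁` by `ι`). Here `Dg j a v` denotes the `j`-th directional derivative of
`g` at `a` along the directions `v 0, …, v (j-1)` (the last index being the outermost
derivative), assumed to exist, to be jointly continuous, multilinear and symmetric. -/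
theorem stmt8
    {X₀ X₁ X₂ X₃ : Type*}
    [NormedAddCommGroup X₀] [NormedSpace ℝ X₀] [CompleteSpace X₀]
    [NormedAddCommGroup X₁] [NormedSpace ℝ X₁] [CompleteSpace X₁]
    [NormedAddCommGroup X₂] [NormedSpace ℝ X₂] [CompleteSpace X₂]
    [NormedAddCommGroup X₃] [NormedSpace ℝ X₃] [CompleteSpace X₃]
    (ι : X₀ →L[ℝ] X₁) (hι : Function.Injective ι)
    (U : Set X₁) (hU : IsOpen U)
    (k : ℕ)
    (f : X₁ → X₂) (fs : Fin k → X₁ → X₂)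
    (Df : X₁ → X₀ → X₂) (Dfs : Fin k → X₁ → X₀ → X₂)
    (hDf : ∀ u ∈ U, ∀ x : X₀,
      Tendsto (fun t : ℝ => t⁻¹ • (f (u + t • ι x) - f u)) (𝓝[≠] 0) (𝓝 (Df u x)))
    (hDfs : ∀ i, ∀ u ∈ U, ∀ x : X₀,
      Tendsto (fun t : ℝ => t⁻¹ • (fs i (u + t • ι x) - fs i u)) (𝓝[≠] 0) (𝓝 (Dfs i u x)))
    (g : X₂ → X₃)
    (Dg : (j : ℕ) → X₂ → (Fin j → X₂) → X₃)
    (hDg0 : ∀ a v, Dg 0 a v = g a)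
    (hDgrec : ∀ j, j ≤ k → ∀ (a : X₂) (w : Fin (j+1) → X₂),
      Tendsto (fun t : ℝ => t⁻¹ • (Dg j (a + t • w (Fin.last j)) (w ∘ Fin.castSucc)
        - Dg j a (w ∘ Fin.castSucc))) (𝓝[≠] 0) (𝓝 (Dg (j+1) a w)))
    (hDgcont : ∀ j, j ≤ k + 1 → Continuous (fun p : X₂ × (Fin j → X₂) => Dg j p.1 p.2))
    (hDgmulti : ∀ j, j ≤ k + 1 → ∀ (a : X₂) (i : Fin j) (v : Fin j → X₂) (y y' : X₂) (c : ℝ),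
      Dg j a (Function.update v i (y + y'))
          = Dg j a (Function.update v i y) + Dg j a (Function.update v i y') ∧
      Dg j a (Function.update v i (c • y)) = c • Dg j a (Function.update v i y))
    (hDgsymm : ∀ j, j ≤ k + 1 → ∀ (a : X₂) (v : Fin j → X₂) (e : Equiv.Perm (Fin j)),
      Dg j a (v ∘ e) = Dg j a v)
    (γ : X₁ → X₃) (hγ : ∀ u, γ u = Dg k (f u) (fun i => fs i u))
    (u : X₁) (hu : u ∈ U) (x : X₀) :
    Tendsto (fun t : ℝ => t⁻¹ • (γ (u + t • ι x) - γ u)) (𝓝[≠] 0)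
      (𝓝 (Dg (k+1) (f u) (Fin.snoc (fun i => fs i u) (Df u x))
        + ∑ i : Fin k, Dg k (f u) (Function.update (fun i' => fs i' u) i (Dfs i u x)))) :=
  stmt8_general ι U k f fs Df Dfs hDf hDfs Dg hDgrec hDgcont hDgmulti γ hγ u hu x
end

section
/- Let X₀ be a Banach space, X a normed space with X₀ continuously embedded in X, Y a locally convex space, U ⊆ X open, and f : U → Y n-times strongly continuously Gâteaux differentiable with respect to X₀, i.e. each ∂^n_{X₀} f(u) is separately continuous n-linear and u ↦ ∂^n_{X₀} f(u) is continuous into the topology of pointwise convergence. Then the evaluation map U × X₀ⁿ → Y, (u, x₁, …, x_n) ↦ ∂^n_{X₀} f(u).(x₁,…,x_n), is jointly continuous. -/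
open Set Filter Topology

-- seminorm of a finite sum
lemma semi_sum_le {Y : Type*} [AddCommGroup Y] [Module ℝ Y] (p : Seminorm ℝ Y)
    {α : Type*} (s : Finset α) (f : α → Y) :
    p (∑ i ∈ s, f i) ≤ ∑ i ∈ s, p (f i) := by
  classical
  induction s using Finset.induction_on with
  | empty => simp
  | insert _ _ h ih =>
    rw [Finset.sum_insert h, Finset.sum_insert h]
    exact le_trans (map_add_le_add p _ _) (add_le_add le_rfl ih)

-- Single-seminorm Banach–Steinhaus for a family of continuous linear maps from a Banach space
lemma bs_aux {X₀ Y : Type*} [NormedAddCommGroup X₀] [NormedSpace ℝ X₀] [CompleteSpace X₀]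
    [AddCommGroup Y] [Module ℝ Y] [TopologicalSpace Y] [IsTopologicalAddGroup Y]
    [ContinuousSMul ℝ Y]
    {ι : Type*} [Nonempty ι] (p : Seminorm ℝ Y) (hp : Continuous p)
    (L : ι → X₀ →L[ℝ] Y) (h : ∀ x, BddAbove (range fun i => p (L i x))) :
    ∃ C : ℝ, 0 ≤ C ∧ ∀ i x, p (L i x) ≤ C * ‖x‖ := by
  have hbdd : BddAbove (range fun i => p.comp (L i).toLinearMap) :=
    Seminorm.bddAbove_range_iff.mpr h
  have hcont : Continuous ⇑(⨆ i, p.comp (L i).toLinearMap) := by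
    rw [Seminorm.coe_iSup_eq hbdd]
    refine Seminorm.continuous_iSup _ (fun i => ?_) hbdd
    rw [Seminorm.coe_comp]
    exact hp.comp (L i).continuous
  obtain ⟨C, hC, hCle⟩ := Seminorm.bound_of_continuous_normedSpace _ hcont
  refine ⟨C, hC.le, fun i x => ?_⟩
  calc p (L i x) ≤ (⨆ i, p.comp (L i).toLinearMap) x := by
        rw [Seminorm.coe_iSup_eq hbdd, iSup_apply]
        exact le_ciSup (h x) i
    _ ≤ C * ‖x‖ := hCle x

-- Uniform boundedness for a pointwise-bounded family of separately continuous multilinear maps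
lemma multi_bound {X₀ Y : Type*} [NormedAddCommGroup X₀] [NormedSpace ℝ X₀] [CompleteSpace X₀]
    [AddCommGroup Y] [Module ℝ Y] [TopologicalSpace Y] [IsTopologicalAddGroup Y]
    [ContinuousSMul ℝ Y] :
    ∀ (m : ℕ) {ι : Type*} [Nonempty ι] (p : Seminorm ℝ Y), Continuous p →
      ∀ (T : ι → MultilinearMap ℝ (fun _ : Fin m => X₀) Y),
      (∀ i (j : Fin m) (v : Fin m → X₀), Continuous fun x => T i (Function.update v j x)) →
      (∀ v, BddAbove (range fun i => p (T i v))) →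
      ∃ C : ℝ, 0 ≤ C ∧ ∀ i v, p (T i v) ≤ C * ∏ j, ‖v j‖ := by
  intro m
  induction m with
  | zero =>
    intro ι _ p hp T hc hb
    obtain ⟨C₀, hC₀⟩ := hb (fun j => j.elim0)
    refine ⟨max C₀ 0, le_max_right _ _, fun i v => ?_⟩
    have hv : v = fun j => j.elim0 := funext fun j => j.elim0
    rw [hv]
    simp only [Finset.univ_eq_empty, Finset.prod_empty, mul_one]
    exact le_trans (hC₀ ⟨i, rfl⟩) (le_max_left _ _)
  | succ m IH =>
    intro ι _ p hp T hc hb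
    have key : ∀ x : X₀, ∃ Cx : ℝ, 0 ≤ Cx ∧ ∀ i (w : Fin m → X₀),
        p ((T i) (Fin.cons x w)) ≤ Cx * ∏ j, ‖w j‖ := by
      intro x
      obtain ⟨Cx, hCx0, hCx⟩ := IH p hp (fun i => (T i).curryLeft x)
        (by
          intro i j v
          have h2 := hc i j.succ (Fin.cons x v)
          simp only [MultilinearMap.curryLeft_apply]
          simpa [Fin.cons_update] using h2)
        (by
          intro w
          simpa only [MultilinearMap.curryLeft_apply] using hb (Fin.cons x w))
      exact ⟨Cx, hCx0, fun i w => by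
        simpa only [MultilinearMap.curryLeft_apply] using hCx i w⟩
    haveI : Nonempty (ι × {w : Fin m → X₀ // ∀ j, ‖w j‖ ≤ 1}) :=
      ⟨⟨Classical.arbitrary ι, ⟨fun _ => 0, fun j => by simp⟩⟩⟩
    let L : (ι × {w : Fin m → X₀ // ∀ j, ‖w j‖ ≤ 1}) → X₀ →L[ℝ] Y := fun iw =>
      { toFun := fun x => T iw.1 (Fin.cons x iw.2.1)
        map_add' := fun x y => by
          have h2 := (T iw.1).map_update_add (Fin.cons 0 iw.2.1) 0 x y
          simpa [Fin.update_cons_zero] using h2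
        map_smul' := fun c x => by
          have h2 := (T iw.1).map_update_smul (Fin.cons 0 iw.2.1) 0 c x
          simpa [Fin.update_cons_zero] using h2
        cont := by
          have h2 := hc iw.1 0 (Fin.cons 0 iw.2.1)
          simpa [Fin.update_cons_zero] using h2 }
    have hpb : ∀ x, BddAbove (range fun iw => p (L iw x)) := by
      intro x
      obtain ⟨Cx, hCx0, hCx⟩ := key x
      refine ⟨Cx, ?_⟩
      rintro r ⟨⟨i, w, hw⟩, rfl⟩
      refine le_trans (hCx i w) ?_
      calc Cx * ∏ j, ‖w j‖ ≤ Cx * 1 := by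
            refine mul_le_mul_of_nonneg_left ?_ hCx0
            exact Finset.prod_le_one (fun j _ => norm_nonneg _) (fun j _ => hw j)
        _ = Cx := mul_one Cx
    obtain ⟨C, hC0, hC⟩ := bs_aux p hp L hpb
    refine ⟨C, hC0, fun i v => ?_⟩
    by_cases hz : ∃ j, v j = 0
    · obtain ⟨j, hj⟩ := hz
      rw [(T i).map_coord_zero j hj, map_zero]
      positivity
    · push_neg at hz
      set c : Fin m → ℝ := fun j => ‖v j.succ‖ with hcdef
      set w : Fin m → X₀ := fun j => (c j)⁻¹ • v j.succ with hwdef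
      have hcne : ∀ j, c j ≠ 0 := fun j => norm_ne_zero_iff.mpr (hz j.succ)
      have hw1 : ∀ j, ‖w j‖ ≤ 1 := fun j => le_of_eq (norm_smul_inv_norm (𝕜 := ℝ) (hz j.succ))
      set cc : Fin (m+1) → ℝ := Fin.cons (1:ℝ) c with hccdef
      set ww : Fin (m+1) → X₀ := Fin.cons (v 0) w with hwwdef
      have hv : v = fun j => cc j • ww j := by
        funext j
        refine Fin.cases ?_ (fun j => ?_) j
        · simp [hccdef, hwwdef]
        · simp [hccdef, hwwdef, hwdef, smul_inv_smul₀ (hcne j)]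
      have h1 : T i v = (∏ j, cc j) • T i ww := by
        conv_lhs => rw [hv]
        exact (T i).map_smul_univ _ _
      have hprodc : ∏ j, cc j = ∏ j, c j := by
        simp [hccdef, Fin.prod_univ_succ]
      have hLle : p (T i ww) ≤ C * ‖v 0‖ := hC ⟨i, ⟨w, hw1⟩⟩ (v 0)
      have hcnn : (0:ℝ) ≤ ∏ j, c j := Finset.prod_nonneg fun j _ => norm_nonneg _
      calc p (T i v) = ‖∏ j, cc j‖ * p (T i ww) := by
            rw [h1, map_smul_eq_mul]
        _ = (∏ j, c j) * p (T i ww) := by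
            rw [hprodc, Real.norm_of_nonneg hcnn]
        _ ≤ (∏ j, c j) * (C * ‖v 0‖) := mul_le_mul_of_nonneg_left hLle hcnn
        _ = C * ∏ j, ‖v j‖ := by rw [Fin.prod_univ_succ]; ring


/-- Remark 2.2: if `X₀` is a Banach space and `u ↦ ∂ⁿ f(u)` is a continuous family (for the
topology of pointwise convergence) of separately continuous multilinear maps `X₀ⁿ → Y`
(`Y` locally convex), then the evaluation `(u, x₁, …, x_n) ↦ ∂ⁿf(u).(x₁,…,x_n)` is jointly
continuous (via Banach–Steinhaus). -/
theorem stmt10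
    {X₀ X Y : Type*}
    [NormedAddCommGroup X₀] [NormedSpace ℝ X₀] [CompleteSpace X₀]
    [NormedAddCommGroup X] [NormedSpace ℝ X]
    [AddCommGroup Y] [Module ℝ Y] [TopologicalSpace Y] [IsTopologicalAddGroup Y]
    [ContinuousSMul ℝ Y] [LocallyConvexSpace ℝ Y]
    (ι : X₀ →L[ℝ] X) (hι : Function.Injective ι)
    (U : Set X) (hU : IsOpen U)
    (n : ℕ) (f : X → Y)
    (Dn : X → (Fin n → X₀) → Y)
    (hadd : ∀ u ∈ U, ∀ (i : Fin n) (v : Fin n → X₀) (x x' : X₀),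
      Dn u (Function.update v i (x + x'))
        = Dn u (Function.update v i x) + Dn u (Function.update v i x'))
    (hsmul : ∀ u ∈ U, ∀ (i : Fin n) (v : Fin n → X₀) (c : ℝ) (x : X₀),
      Dn u (Function.update v i (c • x)) = c • Dn u (Function.update v i x))
    (hsepcont : ∀ u ∈ U, ∀ (i : Fin n) (v : Fin n → X₀),
      Continuous fun x : X₀ => Dn u (Function.update v i x))
    (hucont : ∀ v : Fin n → X₀, ContinuousOn (fun u => Dn u v) U) :
    ContinuousOn (fun p : X × (Fin n → X₀) => Dn p.1 p.2) (U ×ˢ (univ : Set (Fin n → X₀))) := by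
  have hq : WithSeminorms (gaugeSeminormFamily ℝ Y) := with_gaugeSeminormFamily
  have hΦ : ∀ u, u ∈ U → ∃ T : MultilinearMap ℝ (fun _ : Fin n => X₀) Y, ⇑T = Dn u := by
    intro u hu
    refine ⟨{ toFun := Dn u, map_update_add' := ?_, map_update_smul' := ?_ }, rfl⟩
    · intro inst v i x x'
      rw [Subsingleton.elim inst (instDecidableEqFin n)]
      exact hadd u hu i v x x'
    · intro inst v i c x
      rw [Subsingleton.elim inst (instDecidableEqFin n)]
      exact hsmul u hu i v c x
  rintro ⟨u₀, v₀⟩ ⟨hu₀, -⟩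
  rw [ContinuousWithinAt]
  apply tendsto_iff_seq_tendsto.mpr
  intro z hz
  rw [tendsto_nhdsWithin_iff] at hz
  obtain ⟨hz1, hz2⟩ := hz
  classical
  set z' : ℕ → X × (Fin n → X₀) :=
    fun j => if z j ∈ U ×ˢ (univ : Set (Fin n → X₀)) then z j else (u₀, v₀) with hz'def
  have hz'eq : z' =ᶠ[atTop] z := hz2.mono fun j hj => by simp only [hz'def, if_pos hj]
  have hz't : Tendsto z' atTop (𝓝 (u₀, v₀)) := hz1.congr' hz'eq.symm
  set u : ℕ → X := fun j => (z' j).1 with hudef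
  set v : ℕ → (Fin n → X₀) := fun j => (z' j).2 with hvdef
  have huU : ∀ j, u j ∈ U := by
    intro j
    by_cases h : z j ∈ U ×ˢ (univ : Set (Fin n → X₀))
    · simp only [hudef, hz'def, if_pos h]
      exact h.1
    · simp only [hudef, hz'def, if_neg h]
      exact hu₀
  have hut : Tendsto u atTop (𝓝 u₀) := (continuous_fst.tendsto _).comp hz't
  have hvt : Tendsto v atTop (𝓝 v₀) := (continuous_snd.tendsto _).comp hz't
  have hutU : Tendsto u atTop (𝓝[U] u₀) :=
    tendsto_nhdsWithin_iff.mpr ⟨hut, Eventually.of_forall huU⟩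
  have hmaingoal : Tendsto (fun j => Dn (u j) (v j)) atTop (𝓝 (Dn u₀ v₀)) := by
    set T : ℕ → MultilinearMap ℝ (fun _ : Fin n => X₀) Y :=
      fun j => (hΦ (u j) (huU j)).choose with hTdef
    have hT : ∀ j, ⇑(T j) = Dn (u j) := fun j => (hΦ (u j) (huU j)).choose_spec
    rw [hq.tendsto_nhds]
    intro k ε hε
    set p : Seminorm ℝ Y := gaugeSeminormFamily ℝ Y k with hpdef
    have hpc : Continuous p := hq.continuous_seminorm k
    have hlim : ∀ vv : Fin n → X₀,
        Tendsto (fun j => Dn (u j) vv) atTop (𝓝 (Dn u₀ vv)) :=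
      fun vv => Filter.Tendsto.comp (hucont vv u₀ hu₀) hutU
    have hbdd : ∀ vv, BddAbove (range fun j => p (T j vv)) := by
      intro vv
      have h2 := ((hpc.tendsto (Dn u₀ vv)).comp (hlim vv)).bddAbove_range
      simpa [Function.comp_def, hT] using h2
    have hsepT : ∀ j (i : Fin n) (vvv : Fin n → X₀),
        Continuous fun x => T j (Function.update vvv i x) := by
      intro j i vvv
      simp only [hT]
      exact hsepcont (u j) (huU j) i vvv
    obtain ⟨C, hC0, hCb⟩ := multi_bound n p hpc T hsepT hbdd
    set E : Finset (Finset (Fin n)) := Finset.univ.erase ∅ with hEdef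
    set A : ℕ → ℝ :=
      fun j => ∑ s ∈ E, C * ∏ i, ‖s.piecewise (fun i => v j i - v₀ i) v₀ i‖ with hAdef
    set B : ℕ → ℝ := fun j => p (Dn (u j) v₀ - Dn u₀ v₀) with hBdef
    have hmain : ∀ j, p (Dn (u j) (v j) - Dn u₀ v₀) ≤ A j + B j := by
      intro j
      have step1 : p (Dn (u j) (v j) - Dn u₀ v₀)
          ≤ p (Dn (u j) (v j) - Dn (u j) v₀) + B j := by
        have h3 : Dn (u j) (v j) - Dn u₀ v₀
            = (Dn (u j) (v j) - Dn (u j) v₀) + (Dn (u j) v₀ - Dn u₀ v₀) := by abel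
        rw [h3]
        exact map_add_le_add p _ _
      refine step1.trans (add_le_add_left ?_ _)
      have hsum : Dn (u j) (v j) - Dn (u j) v₀
          = ∑ s ∈ E, T j (Finset.piecewise s (fun i => v j i - v₀ i) v₀) := by
        have hadd' := (T j).map_add_univ (fun i => v j i - v₀ i) v₀
        have hvj : ((fun i => v j i - v₀ i) + v₀) = v j := by funext i; simp
        rw [hvj] at hadd'
        rw [← Finset.add_sum_erase Finset.univ _
          (Finset.mem_univ (∅ : Finset (Fin n)))] at hadd'
        rw [Finset.piecewise_empty] at hadd'
        rw [← hT j, hadd', add_sub_cancel_left]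
      rw [hsum]
      refine le_trans (semi_sum_le p E _) (Finset.sum_le_sum ?_)
      intro s hs
      exact hCb j _
    have hA0 : Tendsto A atTop (𝓝 0) := by
      have hterm : ∀ s ∈ E, Tendsto
          (fun j => C * ∏ i, ‖s.piecewise (fun i => v j i - v₀ i) v₀ i‖) atTop (𝓝 0) := by
        intro s hs
        obtain ⟨i₀, hi₀⟩ := Finset.nonempty_of_ne_empty (Finset.ne_of_mem_erase hs)
        have hcontf : Continuous fun vv : Fin n → X₀ =>
            C * ∏ i, ‖s.piecewise (fun i => vv i - v₀ i) v₀ i‖ := by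
          refine continuous_const.mul (continuous_finset_prod _ fun i _ => ?_)
          by_cases hi : i ∈ s
          · simp only [Finset.piecewise_eq_of_mem _ _ _ hi]
            exact ((continuous_apply i).sub continuous_const).norm
          · simp only [Finset.piecewise_eq_of_notMem _ _ _ hi]
            exact continuous_const
        have hz0 : ‖s.piecewise (fun i => v₀ i - v₀ i) v₀ i₀‖ = 0 := by
          rw [Finset.piecewise_eq_of_mem _ _ _ hi₀]
          simp
        have h00 : C * ∏ i, ‖s.piecewise (fun i => v₀ i - v₀ i) v₀ i‖ = 0 := by
          rw [Finset.prod_eq_zero (Finset.mem_univ i₀) hz0, mul_zero]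
        have h4 := (hcontf.tendsto v₀).comp hvt
        rw [h00] at h4
        exact h4
      have h5 := tendsto_finset_sum E hterm
      simpa using h5
    have hB0 : Tendsto B atTop (𝓝 0) := by
      have h1 : Tendsto (fun j => Dn (u j) v₀ - Dn u₀ v₀) atTop
          (𝓝 (Dn u₀ v₀ - Dn u₀ v₀)) := (hlim v₀).sub_const _
      have h2 := (hpc.tendsto _).comp h1
      simpa [Function.comp_def] using h2
    have hfinal : Tendsto (fun j => p (Dn (u j) (v j) - Dn u₀ v₀)) atTop (𝓝 0) :=
      squeeze_zero (fun j => apply_nonneg p _) hmain (by simpa using hA0.add hB0)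
    exact hfinal.eventually_lt_const hε
  refine hmaingoal.congr' (hz'eq.mono fun j hj => ?_)
  simp only [Function.comp_apply, hudef, hvdef, hj]
end

section
/- Let λ > 0, M' ≥ 1, g ∈ L¹((0,T), ℝ) nonnegative, and define C_{λ} := M' · sup_{t' ∈ [0,T]} ∫₀^{t'} e^{−λ v} g(t'−v) dv. Then C_λ → 0 as λ → ∞. -/
open MeasureTheory Set Filter Topology

/-!
After the substitution `u = t' - v` the integral is `∫₀^{t'} e^{-λ(t'-u)} g(u) du`. Split at
`u = t' - δ`: away from `t'` the kernel is at most `e^{-λδ}`, which kills the full mass of `g` as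
`λ → ∞`, while near `t'` it is at most `1` and absolute continuity of the integral makes
`∫_{t'-δ}^{t'} g` small uniformly in `t'` once `δ` is small.
-/

lemma MeasureTheory.Integrable.exists_pos_forall_measure_le_setIntegral_le {α : Type*}
    [MeasurableSpace α] {μ : Measure α} {f : α → ℝ} (hf : Integrable f μ) {ε : ℝ} (hε : 0 < ε) :
    ∃ δ > 0, ∀ s, μ s ≤ ENNReal.ofReal δ → ∫ x in s, f x ∂μ ≤ ε := by
  have h : ∀ᶠ s in comap μ (𝓝 0), ∫ x in s, f x ∂μ ≤ ε :=
    (hf.tendsto_setIntegral_nhds_zero (s := id) tendsto_comap).eventually (eventually_le_nhds hε)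
  rw [eventually_comap, ENNReal.nhds_zero_basis.eventually_iff] at h
  obtain ⟨η, hη, hηs⟩ := h
  obtain ⟨δ, -, hδ, hδη⟩ := ENNReal.lt_iff_exists_real_btwn.1 hη
  exact ⟨δ, ENNReal.ofReal_pos.1 hδ, fun s hs => hηs (hs.trans_lt hδη) s rfl⟩

lemma setIntegral_Ioo_zero_comp_sub_left {E : Type*} [NormedAddCommGroup E] [NormedSpace ℝ E]
    (f : ℝ → E) (t : ℝ) : ∫ v in Ioo 0 t, f (t - v) = ∫ u in Ioo 0 t, f u := by
  rcases le_or_gt 0 t with ht | ht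
  · rw [← integral_Ioc_eq_integral_Ioo, ← integral_Ioc_eq_integral_Ioo,
      ← intervalIntegral.integral_of_le ht, ← intervalIntegral.integral_of_le ht,
      intervalIntegral.integral_comp_sub_left, sub_self, sub_zero]
  · simp [Ioo_eq_empty_of_le ht.le]

lemma setIntegral_exp_mul_le {μ : Measure ℝ} {g : ℝ → ℝ} (hg : Integrable g μ)
    (hg0 : ∀ u, 0 ≤ g u) {s : Set ℝ} {lam δ t : ℝ} (hs : MeasurableSet s) (hst : s ⊆ Iic t)
    (hlam : 0 ≤ lam) :
    ∫ u in s, Real.exp (-lam * (t - u)) * g u ∂μ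
      ≤ Real.exp (-lam * δ) * ∫ u, g u ∂μ + ∫ u in Ioc (t - δ) t, g u ∂μ := by
  set H : ℝ → ℝ := fun u => Real.exp (-lam * δ) * g u + (Ioc (t - δ) t).indicator g u
  have hH : Integrable H μ := (hg.const_mul _).add (hg.indicator measurableSet_Ioc)
  have hH0 : ∀ u, 0 ≤ H u := fun u =>
    add_nonneg (mul_nonneg (Real.exp_pos _).le (hg0 u)) (indicator_nonneg (fun u _ => hg0 u) u)
  have hle : ∀ u ∈ s, Real.exp (-lam * (t - u)) * g u ≤ H u := by
    intro u hu
    have hut : u ≤ t := hst hu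
    simp only [H]
    by_cases hδu : t - δ < u
    · rw [indicator_of_mem (show u ∈ Ioc (t - δ) t from ⟨hδu, hut⟩)]
      have : Real.exp (-lam * (t - u)) ≤ 1 := Real.exp_le_one_iff.2 (by nlinarith)
      nlinarith [hg0 u, Real.exp_pos (-lam * δ)]
    · rw [indicator_of_notMem fun h : u ∈ Ioc (t - δ) t => hδu h.1, add_zero]
      exact mul_le_mul_of_nonneg_right (Real.exp_le_exp.2 (by nlinarith)) (hg0 u)
  calc ∫ u in s, Real.exp (-lam * (t - u)) * g u ∂μ ≤ ∫ u in s, H u ∂μ :=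
        integral_mono_of_nonneg
          (Eventually.of_forall fun u => mul_nonneg (Real.exp_pos _).le (hg0 u))
          hH.integrableOn (ae_restrict_of_forall_mem hs hle)
    _ ≤ ∫ u, H u ∂μ := setIntegral_le_integral hH (Eventually.of_forall hH0)
    _ = Real.exp (-lam * δ) * ∫ u, g u ∂μ + ∫ u in Ioc (t - δ) t, g u ∂μ := by
        rw [integral_add (hg.const_mul _) (hg.indicator measurableSet_Ioc), integral_const_mul,
          integral_indicator measurableSet_Ioc]

lemma tendsto_iSup_setIntegral_exp_mul_comp_sub {T : ℝ} {g : ℝ → ℝ}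
    (hg : IntegrableOn g (Ioo 0 T)) (hg0 : ∀ t, 0 ≤ g t) :
    Tendsto (fun lam : ℝ => ⨆ t' : Icc (0:ℝ) T,
        ∫ v in Ioo (0:ℝ) t'.1, Real.exp (-lam * v) * g (t'.1 - v)) atTop (𝓝 0) := by
  set μ := volume.restrict (Ioo (0:ℝ) T)
  rw [NormedAddGroup.tendsto_nhds_zero]
  intro ε hε
  obtain ⟨δ, hδ, hsmall⟩ := Integrable.exists_pos_forall_measure_le_setIntegral_le hg (half_pos hε)
  have hdecay : Tendsto (fun lam => Real.exp (-lam * δ) * ∫ u, g u ∂μ) atTop (𝓝 0) := by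
    simpa [neg_mul] using
      (Real.tendsto_exp_neg_atTop_nhds_zero.comp (tendsto_id.atTop_mul_const hδ)).mul_const
        (∫ u, g u ∂μ)
  filter_upwards [hdecay.eventually (gt_mem_nhds (half_pos hε)), eventually_ge_atTop 0]
    with lam hlam hlam0
  have hbound : ∀ t' : Icc (0:ℝ) T, ∫ v in Ioo (0:ℝ) t'.1, Real.exp (-lam * v) * g (t'.1 - v)
      ≤ Real.exp (-lam * δ) * ∫ u, g u ∂μ + ε / 2 := by
    rintro ⟨t, -, htT⟩
    calc ∫ v in Ioo (0:ℝ) t, Real.exp (-lam * v) * g (t - v)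
        = ∫ u in Ioo (0:ℝ) t, Real.exp (-lam * (t - u)) * g u ∂μ := by
          rw [← setIntegral_Ioo_zero_comp_sub_left, Measure.restrict_restrict measurableSet_Ioo,
            inter_eq_left.2 (Ioo_subset_Ioo_right htT)]
          simp_rw [sub_sub_cancel]
      _ ≤ Real.exp (-lam * δ) * ∫ u, g u ∂μ + ∫ u in Ioc (t - δ) t, g u ∂μ :=
          setIntegral_exp_mul_le hg hg0 measurableSet_Ioo (fun u hu => hu.2.le) hlam0
      _ ≤ Real.exp (-lam * δ) * ∫ u, g u ∂μ + ε / 2 := by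
          gcongr
          refine hsmall _ ((Measure.restrict_apply_le _ _).trans ?_)
          simp [Real.volume_Ioc]
  have hS0 : 0 ≤ ⨆ t' : Icc (0:ℝ) T,
      ∫ v in Ioo (0:ℝ) t'.1, Real.exp (-lam * v) * g (t'.1 - v) :=
    Real.iSup_nonneg fun t' => setIntegral_nonneg measurableSet_Ioo fun v _ =>
      mul_nonneg (Real.exp_pos _).le (hg0 _)
  have hI0 : 0 ≤ ∫ u, g u ∂μ := integral_nonneg hg0
  rw [Real.norm_eq_abs, abs_of_nonneg hS0]
  linarith [Real.iSup_le hbound (by positivity)]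

theorem stmt15_general
    (T M' : ℝ)
    (g : ℝ → ℝ) (hg : IntegrableOn g (Ioo 0 T)) (hg0 : ∀ t, 0 ≤ g t) :
    Tendsto
      (fun lam : ℝ => M' * ⨆ t' : Icc (0:ℝ) T,
        ∫ v in Ioo (0:ℝ) t'.1, Real.exp (-lam * v) * g (t'.1 - v))
      atTop (𝓝 0) := by
  simpa using (tendsto_iSup_setIntegral_exp_mul_comp_sub hg hg0).const_mul M'

/-- The drift contraction constant `C_λ = M' sup_{t' ∈ [0,T]} ∫₀^{t'} e^{−λv} g(t'−v) dv`
tends to `0` as `λ → ∞`, for `g ∈ L¹((0,T),ℝ)` nonnegative. -/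
theorem stmt15
    (T M' : ℝ) (hT : 0 < T) (hM' : 1 ≤ M')
    (g : ℝ → ℝ) (hg : IntegrableOn g (Ioo 0 T)) (hg0 : ∀ t, 0 ≤ g t) :
    Tendsto
      (fun lam : ℝ => M' * ⨆ t' : Icc (0:ℝ) T,
        ∫ v in Ioo (0:ℝ) t'.1, Real.exp (-lam * v) * g (t'.1 - v))
      atTop (𝓝 0) :=
  stmt15_general T M' g hg hg0
end
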